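/- Let j ∈ ℕ and consider the double sum F_j(a,q) = ∑_{k=0}^{j} ∑_{h=k}^{j} (−1)^{h+k} q^{h(k+1)+k(h+1)} [h choose k]_q [j choose h]_q · [−h; j−h]_a · [0; h]_a / [0; j]_a, a rational function in a and q arising as a 2-bridge multi-sum with two levels of summation. Then F_j(a,q) lies in ℤ[a^{±1}][q^{±1}] (i.e., the apparent denominators cancel), where [m;n]_a := ∏_{l=0}^{n-1} (a·q^{m-l} − a^{-1}·q^{l-m}) / (q^{l+1} − q^{-l-1}). -/

import Mathlib

/-!
The numerators of `[−h; j−h]_a [0; h]_a` and of `[0; j]_a` coincide. What remains is a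
quotient of balanced `q`-factorials, `q^(-h(j-h))` times the Gaussian binomial `[j choose h]`
in `q²`, so the summand no longer depends on `a`. By `q`-Pascal, Gaussian binomials lie in `ℤ[q]`, hence
every summand lies in `ℤ[q^{±1}]`. Algebraic independence of `q` and `a` keeps all
denominators nonzero: `q` is not a root of unity, and `a²` is not a power of `q`.
-/

open Finset

/-- The Gaussian (q-)binomial coefficient `[n choose k]_q`. -/
noncomputable def gbin {F : Type*} [Field F] (q : F) (n k : ℕ) : F :=
  ∏ l ∈ Finset.range k, (1 - q ^ ((n : ℤ) - (l : ℤ))) / (1 - q ^ ((l : ℤ) + 1))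

/-- The balanced `a`-deformed binomial `[m;n]_a`. -/
noncomputable def balBin {F : Type*} [Field F] (q a : F) (m : ℤ) (n : ℕ) : F :=
  ∏ l ∈ Finset.range n,
    (a * q ^ (m - (l : ℤ)) - a⁻¹ * q ^ ((l : ℤ) - m)) /
      (q ^ ((l : ℤ) + 1) - q ^ (-(l : ℤ) - 1))

theorem Transcendental.not_isOfFinOrder {R A : Type*} [CommRing R] [Nontrivial R] [Ring A]
    [Algebra R A] {x : A} (hx : Transcendental R x) : ¬IsOfFinOrder x := by
  rw [isOfFinOrder_iff_pow_eq_one]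
  rintro ⟨n, hn, hxn⟩
  exact hx (IsAlgebraic.of_pow hn (hxn ▸ isAlgebraic_one))

theorem AlgebraicIndependent.pow_ne_pow {R A : Type*} [CommRing R] [CommRing A] [Nontrivial A]
    [Algebra R A] {q a : A} (hind : AlgebraicIndependent R ![q, a]) {m : ℕ} (hm : 0 < m)
    (n : ℕ) : a ^ m ≠ q ^ n := by
  intro h
  have hq : q ∈ Algebra.adjoin R (![q, a] '' {0}) := Algebra.subset_adjoin (by simp)
  apply hind.transcendental_adjoin (s := {0}) (i := 1) (by simp)
  refine IsAlgebraic.of_pow hm ?_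
  simp only [Matrix.cons_val_one, Matrix.cons_val_fin_one, h]
  exact isAlgebraic_algebraMap (⟨q ^ n, pow_mem hq n⟩ : Algebra.adjoin R (![q, a] '' {0}))

section Laurent

variable {R F : Type*} [CommRing R] [Field F] [Algebra R F]

open Polynomial in
theorem exists_pow_mul_eq_aeval_of_mem_adjoin_inv {q x : F} (hq : q ≠ 0)
    (hx : x ∈ Algebra.adjoin R {q, q⁻¹}) : ∃ (β : ℕ) (P : R[X]), q ^ β * x = aeval q P := by
  induction hx using Algebra.adjoin_induction with
  | mem x hx =>
    rcases hx with rfl | rfl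
    · exact ⟨0, X, by simp⟩
    · exact ⟨1, 1, by simp [hq]⟩
  | algebraMap r => exact ⟨0, C r, by simp⟩
  | add x y _ _ hx hy =>
    obtain ⟨β, P, hP⟩ := hx
    obtain ⟨γ, Q, hQ⟩ := hy
    exact ⟨β + γ, X ^ γ * P + X ^ β * Q, by simp [← hP, ← hQ]; ring⟩
  | mul x y _ _ hx hy =>
    obtain ⟨β, P, hP⟩ := hx
    obtain ⟨γ, Q, hQ⟩ := hy
    exact ⟨β + γ, P * Q, by simp [← hP, ← hQ]; ring⟩

theorem exists_eval₂_eq_pow_mul_pow_mul_of_mem_adjoin_inv {q x : F} (hq : q ≠ 0)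
    (hx : x ∈ Algebra.adjoin ℤ {q, q⁻¹}) (a : F) :
    ∃ p : MvPolynomial (Fin 2) ℤ, ∃ α β : ℕ,
      a ^ α * q ^ β * x = MvPolynomial.eval₂ (Int.castRingHom F) ![a, q] p := by
  obtain ⟨β, P, hP⟩ := exists_pow_mul_eq_aeval_of_mem_adjoin_inv hq hx
  refine ⟨P.toMvPolynomial 1, 0, β, ?_⟩
  rw [← algebraMap_int_eq, ← MvPolynomial.aeval_def, MvPolynomial.aeval_toMvPolynomial, pow_zero,
    one_mul, hP]
  rfl

end Laurent

section Gaussian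

variable {F : Type*} [Field F]

theorem zpow_natCast_add_one (x : F) (l : ℕ) : x ^ ((l : ℤ) + 1) = x ^ (l + 1) := by
  rw [← Nat.cast_succ, zpow_natCast]

theorem one_sub_pow_succ_ne_zero {x : F} (hx : ¬IsOfFinOrder x) (l : ℕ) : 1 - x ^ (l + 1) ≠ 0 :=
  sub_ne_zero.2 fun h => hx (isOfFinOrder_iff_pow_eq_one.2 ⟨l + 1, l.succ_pos, h.symm⟩)

theorem gbin_succ_succ {x : F} (hx0 : x ≠ 0) (hx : ¬IsOfFinOrder x) (n k : ℕ) :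
    gbin x (n + 1) (k + 1) = gbin x n k + x ^ (k + 1) * gbin x n (k + 1) := by
  have hden : ∏ l ∈ range k, (1 - x ^ (l + 1)) ≠ 0 :=
    prod_ne_zero_iff.2 fun l _ => one_sub_pow_succ_ne_zero hx l
  have hk := one_sub_pow_succ_ne_zero hx k
  have hexp : x ^ (k + 1) * x ^ ((n : ℤ) - k) = x ^ (n + 1) := by
    rw [← zpow_natCast, ← zpow_natCast, ← zpow_add₀ hx0]; push_cast; ring_nf
  simp only [gbin, prod_div_distrib, zpow_natCast_add_one]
  rw [prod_range_succ', prod_range_succ, prod_range_succ]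
  push_cast
  simp only [add_sub_add_right_eq_sub, sub_zero, zpow_natCast_add_one, ← hexp]
  field_simp
  ring

theorem gbin_mem_adjoin {x : F} (hx0 : x ≠ 0) (hx : ¬IsOfFinOrder x) (n k : ℕ) :
    gbin x n k ∈ Algebra.adjoin ℤ {x} := by
  induction n generalizing k with
  | zero =>
    cases k with
    | zero => simp [gbin]
    | succ k => simp [gbin, prod_range_succ']
  | succ n ih =>
    cases k with
    | zero => simp [gbin]
    | succ k =>
      rw [gbin_succ_succ hx0 hx]
      exact add_mem (ih k) (mul_mem (pow_mem (Algebra.self_mem_adjoin_singleton ℤ x) _) (ih _))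

theorem gbin_add_right (x : F) (h n : ℕ) :
    gbin x (h + n) n = ∏ i ∈ range n, (1 - x ^ (h + i + 1)) / (1 - x ^ (i + 1)) := by
  simp only [gbin, prod_div_distrib, zpow_natCast_add_one]
  congr 1
  rw [← prod_range_reflect]
  refine prod_congr rfl fun i hi => ?_
  rw [← zpow_natCast]
  congr 2
  have := mem_range.1 hi
  omega

end Gaussian

section Balanced

variable {F : Type*} [Field F] {q a : F}

noncomputable def balNum (q a : F) (m : ℤ) (n : ℕ) : F :=
  ∏ l ∈ range n, (a * q ^ (m - (l : ℤ)) - a⁻¹ * q ^ ((l : ℤ) - m))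

noncomputable def balFactorial (q : F) (n : ℕ) : F :=
  ∏ l ∈ range n, (q ^ ((l : ℤ) + 1) - q ^ (-(l : ℤ) - 1))

theorem balBin_eq_div (q a : F) (m : ℤ) (n : ℕ) :
    balBin q a m n = balNum q a m n / balFactorial q n :=
  prod_div_distrib ..

theorem balNum_add (q a : F) (m : ℤ) (h n : ℕ) :
    balNum q a m (h + n) = balNum q a m h * balNum q a (m - h) n := by
  rw [balNum, prod_range_add]
  congr 1
  refine prod_congr rfl fun i _ => ?_
  push_cast
  ring_nf

theorem balBin_mul_balBin_div_balBin (m : ℤ) {h n : ℕ} (hN : balNum q a m (h + n) ≠ 0) :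
    balBin q a (m - h) n * balBin q a m h / balBin q a m (h + n) =
      balFactorial q (h + n) / (balFactorial q h * balFactorial q n) := by
  rw [balNum_add, mul_comm] at hN
  simp only [balBin_eq_div, balNum_add]
  rw [div_mul_div_comm, div_div_div_eq, mul_comm (balNum q a m h), mul_comm (_ * _) (_ * _),
    mul_div_mul_left _ _ hN, mul_comm (balFactorial q n)]

theorem balFactorial_factor_eq (hq : q ≠ 0) (l : ℕ) :
    q ^ ((l : ℤ) + 1) - q ^ (-(l : ℤ) - 1) = -((q ^ (l + 1))⁻¹ * (1 - (q ^ 2) ^ (l + 1))) := by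
  rw [zpow_natCast_add_one, show -(l : ℤ) - 1 = -((l + 1 : ℕ) : ℤ) by push_cast; ring,
    zpow_neg, zpow_natCast]
  field_simp
  ring

theorem balFactorial_ne_zero (hq0 : q ≠ 0) (hq : ¬IsOfFinOrder q) (n : ℕ) :
    balFactorial q n ≠ 0 :=
  prod_ne_zero_iff.2 fun l _ => balFactorial_factor_eq hq0 l ▸ neg_ne_zero.2
    (mul_ne_zero (inv_ne_zero (pow_ne_zero _ hq0))
      (one_sub_pow_succ_ne_zero (by simp [isOfFinOrder_pow, hq]) l))

theorem balFactorial_add_div (hq0 : q ≠ 0) (hq : ¬IsOfFinOrder q) (h n : ℕ) :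
    balFactorial q (h + n) / (balFactorial q h * balFactorial q n) =
      (q ^ (h * n))⁻¹ * gbin (q ^ 2) (h + n) n := by
  have hfactor (i : ℕ) : (q ^ ((h + i : ℕ) + 1 : ℤ) - q ^ (-((h + i : ℕ) : ℤ) - 1)) /
      (q ^ ((i : ℤ) + 1) - q ^ (-(i : ℤ) - 1)) =
      (q ^ h)⁻¹ * ((1 - (q ^ 2) ^ (h + i + 1)) / (1 - (q ^ 2) ^ (i + 1))) := by
    have := one_sub_pow_succ_ne_zero (x := q ^ 2) (by simp [isOfFinOrder_pow, hq]) i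
    rw [balFactorial_factor_eq hq0, balFactorial_factor_eq hq0]
    field_simp
    ring
  rw [balFactorial, prod_range_add, ← balFactorial,
    mul_div_mul_left _ _ (balFactorial_ne_zero hq0 hq h), balFactorial, ← prod_div_distrib,
    prod_congr rfl fun i _ => hfactor i, prod_mul_distrib, prod_const, card_range, inv_pow,
    pow_mul, gbin_add_right]

theorem balNum_zero_ne_zero (ha : a ≠ 0) (hq : q ≠ 0) (haq : ∀ l : ℕ, a ^ 2 ≠ q ^ (2 * l))
    (n : ℕ) : balNum q a 0 n ≠ 0 := by
  refine prod_ne_zero_iff.2 fun l _ h => haq l ?_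
  rw [zero_sub, sub_zero, zpow_neg, zpow_natCast, sub_eq_zero] at h
  field_simp at h
  rw [pow_mul']
  linear_combination h

theorem balBin_mul_balBin_div_balBin_mem_adjoin (hq0 : q ≠ 0) (hq : ¬IsOfFinOrder q) {h j : ℕ}
    (hhj : h ≤ j) (hN : balNum q a 0 j ≠ 0) :
    balBin q a (-h) (j - h) * balBin q a 0 h / balBin q a 0 j ∈ Algebra.adjoin ℤ {q, q⁻¹} := by
  obtain ⟨n, rfl⟩ := Nat.exists_eq_add_of_le hhj
  have hq2 : q ^ 2 ∈ Algebra.adjoin ℤ {q, q⁻¹} := pow_mem (Algebra.subset_adjoin (by simp)) 2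
  rw [Nat.add_sub_cancel_left, ← zero_sub, balBin_mul_balBin_div_balBin 0 hN,
    balFactorial_add_div hq0 hq, ← inv_pow]
  exact mul_mem (pow_mem (Algebra.subset_adjoin (by simp)) _)
    (Algebra.adjoin_le (Set.singleton_subset_iff.2 hq2)
      (gbin_mem_adjoin (pow_ne_zero 2 hq0) (by simp [isOfFinOrder_pow, hq]) _ _))

end Balanced

theorem doubleSum_is_Laurent_general {F : Type*} [Field F] [Algebra ℚ F]
    (q a : F) (hind : AlgebraicIndependent ℚ ![q, a]) (j : ℕ) :
    ∃ p : MvPolynomial (Fin 2) ℤ, ∃ α β : ℕ,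
      a ^ α * q ^ β *
          (∑ k ∈ Finset.range (j + 1), ∑ h ∈ Finset.Icc k j,
            (-1 : F) ^ (h + k) * q ^ (h * (k + 1) + k * (h + 1)) *
              gbin q h k * gbin q j h *
              balBin q a (-(h : ℤ)) (j - h) * balBin q a 0 h / balBin q a 0 j) =
        MvPolynomial.eval₂ (Int.castRingHom F) ![a, q] p := by
  have hq : ¬IsOfFinOrder q := by simpa using (hind.transcendental 0).not_isOfFinOrder
  have hq0 : q ≠ 0 := by simpa using hind.ne_zero 0
  have hN : balNum q a 0 j ≠ 0 :=
    balNum_zero_ne_zero (by simpa using hind.ne_zero 1) hq0 (fun l => hind.pow_ne_pow two_pos _) j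
  have hgbin (n k : ℕ) : gbin q n k ∈ Algebra.adjoin ℤ {q, q⁻¹} :=
    Algebra.adjoin_mono (by simp) (gbin_mem_adjoin hq0 hq n k)
  refine exists_eval₂_eq_pow_mul_pow_mul_of_mem_adjoin_inv hq0
    (sum_mem fun k _ => sum_mem fun h hh => ?_) a
  rw [mul_div_assoc, mul_assoc, ← mul_div_assoc]
  refine mul_mem (mul_mem (mul_mem (mul_mem ?_ ?_) (hgbin _ _)) (hgbin _ _))
    (balBin_mul_balBin_div_balBin_mem_adjoin hq0 hq (mem_Icc.1 hh).2 hN)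
  · exact pow_mem (neg_mem (one_mem _)) _
  · exact pow_mem (Algebra.subset_adjoin (by simp)) _

/-- The 2-bridge double sum `F_j(a,q)` lies in `ℤ[a^{±1}, q^{±1}]`:
after clearing a monomial `a^α q^β` it is the evaluation of an integral
polynomial in `a` and `q`. -/
theorem doubleSum_is_Laurent {F : Type*} [Field F] [CharZero F] [Algebra ℚ F]
    (q a : F) (hind : AlgebraicIndependent ℚ ![q, a]) (j : ℕ) :
    ∃ p : MvPolynomial (Fin 2) ℤ, ∃ α β : ℕ,
      a ^ α * q ^ β *
          (∑ k ∈ Finset.range (j + 1), ∑ h ∈ Finset.Icc k j,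
            (-1 : F) ^ (h + k) * q ^ (h * (k + 1) + k * (h + 1)) *
              gbin q h k * gbin q j h *
              balBin q a (-(h : ℤ)) (j - h) * balBin q a 0 h / balBin q a 0 j) =
        MvPolynomial.eval₂ (Int.castRingHom F) ![a, q] p :=
  doubleSum_is_Laurent_general q a hind j
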